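/- arXiv:0909.3921 — 2 statements merged into one kernel-verified Lean document; each statement's English description precedes it below -/
import Mathlib

section
/- Under assumption (A1), for every Λ ⊂ {1,…,d} the local Markov-additive process (Z_Λ(t)) satisfies the communication condition on ℤ_+^{Λ,d}: there exist θ > 0 and C > 0 such that for any x ≠ x' in ℤ_+^{Λ,d} there is a sequence of points x_0, x_1, …, x_n ∈ ℤ_+^{Λ,d} with x_0 = x, x_n = x' and n ≤ C|x' − x|, such that |x_k − x_{k−1}| ≤ C and P_{x_{k−1}}(Z_Λ(1) = x_k) ≥ θ for all k = 1,…,n. -/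
open Filter Topology

attribute [local instance] Classical.propDecidable

noncomputable section

variable {V : Type*} [AddCommGroup V]

/-- `n`-step transition kernel of the random walk with step distribution `μ`,
killed upon leaving the set `A` : `kern μ A n x y = P_x(S n = y, τ_A > n)`,
where `τ_A` is the first exit time from `A`. -/
def kern (μ : V → ℝ) (A : Set V) : ℕ → V → V → ℝ
  | 0 => fun x y => if x = y ∧ x ∈ A then 1 else 0
  | n + 1 => fun x y => ∑' z : V, (if x ∈ A then μ (z - x) else 0) * kern μ A n z y

/-- Green function of the walk killed outside `A`. -/
def green (μ : V → ℝ) (A : Set V) (x y : V) : ℝ :=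
  ∑' n : ℕ, kern μ A n x y

/-- `E_x [ g(S τ) ; S τ ∈ B, τ < ∞ ]`, where `τ` is the first exit time from `A`. -/
def exitExp (μ : V → ℝ) (A B : Set V) (g : V → ℝ) (x : V) : ℝ :=
  ∑' n : ℕ, ∑' z : V, kern μ A n x z *
    ∑' y : V, (if y ∉ A ∧ y ∈ B then μ (y - z) else 0) * g y

/-- `ℝ≥0∞`-valued version of `exitExp`. -/
def exitExpE (μ : V → ℝ) (A B : Set V) (g : V → ℝ) (x : V) : ENNReal :=
  ∑' n : ℕ, ∑' z : V, ENNReal.ofReal (kern μ A n x z) *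
    ∑' y : V, ENNReal.ofReal ((if y ∉ A ∧ y ∈ B then μ (y - z) else 0) * g y)

/-- `P_x(S t = y for some t ≥ 0)` for the walk killed outside `A`
(first passage decomposition). -/
def hitProb (μ : V → ℝ) (A : Set V) (x y : V) : ℝ :=
  (if x = y ∧ x ∈ A then 1 else 0) +
    ∑' n : ℕ, ∑' z : V, kern μ (A \ {y}) n x z * (if y ∈ A then μ (y - z) else 0)

/-- `h` is (strictly speaking, satisfies the mean value property of a) harmonic
function on `A` for the walk with step distribution `μ` killed outside `A`. -/
def HarmOn (μ : V → ℝ) (A : Set V) (h : V → ℝ) : Prop :=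
  ∀ x ∈ A, h x = ∑' y : V, if y ∈ A then μ (y - x) * h y else 0

/-- Irreducibility of the walk killed outside `A`. -/
def Irred (μ : V → ℝ) (A : Set V) : Prop :=
  ∀ x ∈ A, ∀ x' ∈ A, ∃ (k : ℕ) (c : ℕ → V), c 0 = x ∧ c k = x' ∧
    (∀ j ≤ k, c j ∈ A) ∧ ∀ j < k, 0 < μ (c (j + 1) - c j)

/-- A sequence `xs` is fundamental for the walk killed outside `A` :
the Martin kernels `G(x, xs n)/G(x₀, xs n)` converge for every `x ∈ A`. -/
def Fundamental (μ : V → ℝ) (A : Set V) (x₀ : V) (xs : ℕ → V) : Prop :=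
  ∀ x ∈ A, ∃ L : ℝ,
    Tendsto (fun n => green μ A x (xs n) / green μ A x₀ (xs n)) atTop (𝓝 L)

/-- ℓ¹-norm of an integer vector. -/
def znorm {ι : Type*} [Fintype ι] (x : ι → ℤ) : ℝ := ∑ i, |(x i : ℝ)|

/-- ℓ¹-norm of a real vector. -/
def rnorm {ι : Type*} [Fintype ι] (q : ι → ℝ) : ℝ := ∑ i, |q i|

variable {d : ℕ}

/-- `ℤ^{Λ,d}_+ = {x ∈ ℤ^d : xⁱ > 0 for all i ∈ Λ}`. -/
def posDom (Λ : Set (Fin d)) : Set (Fin d → ℤ) := {x | ∀ i ∈ Λ, 0 < x i}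

/-- `ℤ^d_+ = {x ∈ ℤ^d : xⁱ > 0 for all i}`. -/
def posAll : Set (Fin d → ℤ) := {x | ∀ i, 0 < x i}

/-- `a · z` for `a ∈ ℝ^d`, `z ∈ ℤ^d`. -/
def dotZ (a : Fin d → ℝ) (z : Fin d → ℤ) : ℝ := ∑ i, a i * (z i : ℝ)

/-- `a · q` for `a, q ∈ ℝ^d`. -/
def dotR (a q : Fin d → ℝ) : ℝ := ∑ i, a i * q i

/-- jump generating function `φ(a) = Σ_z μ(z) exp(a·z)` (valued in `ℝ≥0∞`). -/
def phiE (μ : (Fin d → ℤ) → ℝ) (a : Fin d → ℝ) : ENNReal :=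
  ∑' z : Fin d → ℤ, ENNReal.ofReal (μ z * Real.exp (dotZ a z))

/-- `D = {a ∈ ℝ^d : φ(a) ≤ 1}`. -/
def Dset (μ : (Fin d → ℤ) → ℝ) : Set (Fin d → ℝ) := {a | phiE μ a ≤ 1}

/-- mean vector `M = Σ_z μ(z) z`. -/
def Mvec (μ : (Fin d → ℤ) → ℝ) : Fin d → ℝ := fun i => ∑' z : Fin d → ℤ, μ z * (z i : ℝ)

/-- `Λ(M) = {i : Mⁱ = 0}`. -/
def LambdaM (μ : (Fin d → ℤ) → ℝ) : Set (Fin d) := {i | Mvec μ i = 0}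

/-- Assumption (A1) : irreducibility on every `ℤ^{Λ,d}_+`. -/
def A1 (μ : (Fin d → ℤ) → ℝ) : Prop := ∀ Λ : Set (Fin d), Irred μ (posDom Λ)

/-- Assumption (A2) : `φ` is finite on a neighborhood of the set `D`. -/
def A2 (μ : (Fin d → ℤ) → ℝ) : Prop :=
  ∃ U : Set (Fin d → ℝ), IsOpen U ∧ Dset μ ⊆ U ∧ ∀ a ∈ U, phiE μ a ≠ ⊤

/-- Assumption (A3) : `M ≠ 0`. -/
def A3 (μ : (Fin d → ℤ) → ℝ) : Prop := Mvec μ ≠ 0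

/-- projection `x ↦ x^Λ`. -/
def projL (Λ : Set (Fin d)) (x : Fin d → ℤ) : ↥Λ → ℤ := fun i => x (i : Fin d)

/-- jump distribution `μ_Λ(v) = Σ_{x : x^Λ = v} μ(x)` of the projected walk. -/
def muL (μ : (Fin d → ℤ) → ℝ) (Λ : Set (Fin d)) (v : ↥Λ → ℤ) : ℝ :=
  ∑' x : Fin d → ℤ, if projL Λ x = v then μ x else 0

/-- `ℤ^Λ_+`. -/
def posL (Λ : Set (Fin d)) : Set (↥Λ → ℤ) := {u | ∀ i, 0 < u i}

end

section AuxChain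
variable {d : ℕ}

def chain (μ : (Fin d → ℤ) → ℝ) (Λ : Set (Fin d)) (θ : ℝ) (m : ℕ) (B : ℝ)
    (y y' : Fin d → ℤ) : Prop :=
  ∃ (k : ℕ) (c : ℕ → Fin d → ℤ), k ≤ m ∧ c 0 = y ∧ c k = y' ∧
    (∀ j ≤ k, c j ∈ posDom Λ) ∧
    ∀ j < k, znorm (c (j + 1) - c j) ≤ B ∧ θ ≤ μ (c (j + 1) - c j)

lemma znorm_nonneg {ι : Type*} [Fintype ι] (x : ι → ℤ) : 0 ≤ znorm x :=
  Finset.sum_nonneg fun _ _ => abs_nonneg _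

lemma chain_refl {μ : (Fin d → ℤ) → ℝ} {Λ : Set (Fin d)} {θ B : ℝ} {m : ℕ}
    {y : Fin d → ℤ} (hy : y ∈ posDom Λ) : chain μ Λ θ m B y y :=
  ⟨0, fun _ => y, Nat.zero_le _, rfl, rfl, fun _ _ => hy,
    fun j hj => absurd hj (Nat.not_lt_zero j)⟩

lemma chain_mono {μ : (Fin d → ℤ) → ℝ} {Λ : Set (Fin d)} {θ θ' B B' : ℝ}
    {m m' : ℕ} {y y' : Fin d → ℤ}
    (hθ : θ' ≤ θ) (hm : m ≤ m') (hB : B ≤ B') (h : chain μ Λ θ m B y y') :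
    chain μ Λ θ' m' B' y y' := by
  obtain ⟨k, c, hk, h0, hke, hmem, hstep⟩ := h
  exact ⟨k, c, hk.trans hm, h0, hke, hmem, fun j hj =>
    ⟨(hstep j hj).1.trans hB, hθ.trans (hstep j hj).2⟩⟩

lemma chain_trans {μ : (Fin d → ℤ) → ℝ} {Λ : Set (Fin d)} {θ B : ℝ}
    {m m' : ℕ} {y y' y'' : Fin d → ℤ}
    (h1 : chain μ Λ θ m B y y') (h2 : chain μ Λ θ m' B y' y'') :
    chain μ Λ θ (m + m') B y y'' := by
  obtain ⟨k, c, hk, h0, hke, hmem, hstep⟩ := h1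
  obtain ⟨l, e, hl, he0, hle, hmem', hstep'⟩ := h2
  refine ⟨k + l, fun j => if j < k then c j else e (j - k), by omega, ?_, ?_, ?_, ?_⟩
  · by_cases h : 0 < k
    · simp only [if_pos h, h0]
    · have hk0 : k = 0 := by omega
      subst hk0
      simp only [Nat.lt_irrefl, if_neg, Nat.sub_zero, not_false_iff]
      rw [he0, ← hke, h0]
  · have hn : ¬ (k + l < k) := by omega
    simp only [if_neg hn]
    have hkl : k + l - k = l := by omega
    rw [hkl, hle]
  · intro j hj
    by_cases h : j < k
    · simpa [h] using hmem j (le_of_lt h)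
    · have : j - k ≤ l := by omega
      simpa [h] using hmem' (j - k) this
  · intro j hj
    by_cases h1' : j + 1 < k
    · have hjk : j < k := by omega
      simpa [h1', hjk] using hstep j hjk
    · by_cases h2' : j < k
      · -- j + 1 = k
        have hjk1 : j + 1 = k := by omega
        have hek : e (j + 1 - k) = c (j + 1) := by
          rw [hjk1, Nat.sub_self, he0, ← hke]
        simp only [h1', if_neg, h2', if_pos, not_false_iff]
        rw [hek]
        exact hstep j h2'
      · have hj' : j - k < l := by omega
        have e1 : j + 1 - k = (j - k) + 1 := by omega
        simp only [h1', h2', if_neg, not_false_iff]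
        rw [e1]
        exact hstep' (j - k) hj'

lemma move_exists {μ : (Fin d → ℤ) → ℝ} {Λ : Set (Fin d)}
    (hIrr : Irred μ (posDom Λ)) {a b : Fin d → ℤ}
    (ha : a ∈ posDom Λ) (hb : b ∈ posDom Λ) :
    ∃ θ : ℝ, 0 < θ ∧ ∃ (m : ℕ) (B : ℝ), 0 ≤ B ∧
      ∀ y : Fin d → ℤ, (∀ i ∈ Λ, a i ≤ y i) → chain μ Λ θ m B y (y + (b - a)) := by
  obtain ⟨k, c, h0, hke, hmem, hpos⟩ := hIrr a ha b hb
  rcases Nat.eq_zero_or_pos k with hk0 | hk0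
  · subst hk0
    have hba : b - a = 0 := by rw [← h0, ← hke, sub_self]
    refine ⟨1, one_pos, 0, 0, le_rfl, fun y hy => ?_⟩
    rw [hba, add_zero]
    refine chain_refl fun i hi => ?_
    have h1 := ha i hi
    have h2 := hy i hi
    omega
  · have hs : (Finset.range k).Nonempty := ⟨0, Finset.mem_range.2 hk0⟩
    refine ⟨(Finset.range k).inf' hs (fun j => μ (c (j + 1) - c j)), ?_, k,
      (Finset.range k).sup' hs (fun j => znorm (c (j + 1) - c j)), ?_, fun y hy => ?_⟩
    · exact (Finset.lt_inf'_iff hs).2 fun j hj => hpos j (Finset.mem_range.1 hj)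
    · exact le_trans (znorm_nonneg _)
        (Finset.le_sup' (fun j => znorm (c (j + 1) - c j)) (Finset.mem_range.2 hk0))
    · refine ⟨k, fun j => c j + (y - a), le_rfl, ?_, ?_, ?_, ?_⟩
      · show c 0 + (y - a) = y
        rw [h0]; abel
      · show c k + (y - a) = y + (b - a)
        rw [hke]; abel
      · intro j hj i hi
        have h1 : 0 < c j i := hmem j hj i hi
        have h2 := hy i hi
        show 0 < c j i + (y i - a i)
        omega
      · intro j hj
        have hd : (c (j + 1) + (y - a)) - (c j + (y - a)) = c (j + 1) - c j := by abel
        rw [hd]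
        exact ⟨Finset.le_sup' (fun j => znorm (c (j + 1) - c j)) (Finset.mem_range.2 hj),
          Finset.inf'_le (fun j => μ (c (j + 1) - c j)) (Finset.mem_range.2 hj)⟩

lemma phase2 {μ : (Fin d → ℤ) → ℝ} {Λ : Set (Fin d)} {θ B : ℝ} {m : ℕ}
    (Hmv : ∀ (i : Fin d) (s : ℤ), (s = 1 ∨ s = -1) → ∀ y : Fin d → ℤ,
      (∀ j ∈ Λ, 2 ≤ y j) → chain μ Λ θ m B y (y + Pi.single i s)) :
    ∀ (N : ℕ) (y y' : Fin d → ℤ), (∀ i ∈ Λ, 2 ≤ y i) → (∀ i ∈ Λ, 2 ≤ y' i) →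
      (∑ i, (y' i - y i).natAbs) = N → chain μ Λ θ (m * N) B y y' := by
  intro N
  induction N with
  | zero =>
    intro y y' hy hy' hN
    have hyy : y = y' := funext fun i => by
      have := (Finset.sum_eq_zero_iff.1 hN) i (Finset.mem_univ i)
      omega
    subst hyy
    exact chain_refl fun i hi => by have := hy i hi; omega
  | succ N ih =>
    intro y y' hy hy' hN
    have hex : ∃ i, y i ≠ y' i := by
      by_contra h
      push_neg at h
      have : (∑ i, (y' i - y i).natAbs) = 0 :=
        Finset.sum_eq_zero fun i _ => by rw [h i]; simp
      omega
    obtain ⟨i, hi⟩ := hex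
    set s : ℤ := if y i < y' i then 1 else -1 with hs
    set z : Fin d → ℤ := y + Pi.single i s with hz
    have hzi : z i = y i + s := by simp [hz]
    have hzj : ∀ j ≠ i, z j = y j := fun j hj => by
      simp [hz, Pi.single_eq_of_ne hj]
    have hscase : s = 1 ∨ s = -1 := by
      rw [hs]; split_ifs <;> simp
    have hz2 : ∀ j ∈ Λ, 2 ≤ z j := by
      intro j hj
      by_cases h : j = i
      · subst h
        rw [hzi, hs]
        have h1 := hy j hj
        have h2 := hy' j hj
        split_ifs <;> omega
      · rw [hzj j h]; exact hy j hj
    have hsum : (∑ j, (y' j - z j).natAbs) = N := by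
      have e1 : ∑ j ∈ Finset.univ.erase i, (y' j - z j).natAbs =
          ∑ j ∈ Finset.univ.erase i, (y' j - y j).natAbs :=
        Finset.sum_congr rfl fun j hj => by rw [hzj j (Finset.ne_of_mem_erase hj)]
      have e2 : ∑ j ∈ Finset.univ.erase i, (y' j - y j).natAbs + (y' i - y i).natAbs
          = N + 1 := by
        rw [Finset.sum_erase_add _ _ (Finset.mem_univ i)]; exact hN
      have e3 : (y' i - z i).natAbs + 1 = (y' i - y i).natAbs := by
        rw [hzi, hs]
        split_ifs with h <;> omega
      calc (∑ j, (y' j - z j).natAbs)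
          = ∑ j ∈ Finset.univ.erase i, (y' j - z j).natAbs + (y' i - z i).natAbs := by
            rw [Finset.sum_erase_add _ _ (Finset.mem_univ i)]
        _ = N := by rw [e1]; omega
    have h1 := Hmv i s hscase y hy
    have h2 := ih z y' hz2 hy' hsum
    have h3 := chain_trans (by rw [← hz] at h1; exact h1) h2
    exact chain_mono le_rfl (by rw [Nat.mul_succ]; omega) le_rfl h3

end AuxChain
theorem statement7 {d : ℕ} (μ : (Fin d → ℤ) → ℝ)
    (hnn : ∀ z, 0 ≤ μ z) (hsum : HasSum μ 1)
    (hA1 : A1 μ) (Λ : Set (Fin d)) :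
    ∃ θ : ℝ, 0 < θ ∧ ∃ C : ℝ, 0 < C ∧
      ∀ x ∈ posDom Λ, ∀ x' ∈ posDom Λ, x ≠ x' →
        ∃ (n : ℕ) (c : ℕ → (Fin d → ℤ)),
          c 0 = x ∧ c n = x' ∧ (n : ℝ) ≤ C * znorm (x' - x) ∧
          (∀ j ≤ n, c j ∈ posDom Λ) ∧
          ∀ j < n, znorm (c (j + 1) - c j) ≤ C ∧ θ ≤ μ (c (j + 1) - c j) := by
  have hIrr : Irred μ (posDom Λ) := hA1 Λ
  have hone : (fun _ => 1 : Fin d → ℤ) ∈ posDom Λ := fun i _ => one_pos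
  have htwo : (fun _ => 2 : Fin d → ℤ) ∈ posDom Λ := fun i _ => two_pos
  obtain ⟨θ₁, hθ₁, m₁, B₁, hB₁, Hup⟩ := move_exists hIrr hone htwo
  obtain ⟨θ₂, hθ₂, m₂, B₂, hB₂, Hdown⟩ := move_exists hIrr htwo hone
  -- coordinate moves
  have key : ∀ p : Fin d × Bool, ∃ θ : ℝ, 0 < θ ∧ ∃ (m : ℕ) (B : ℝ), 0 ≤ B ∧
      ∀ y : Fin d → ℤ, (∀ j ∈ Λ, 2 ≤ y j) →
        chain μ Λ θ m B y (y + Pi.single p.1 (if p.2 then 1 else -1)) := by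
    intro p
    have hb : ((fun _ => 2 : Fin d → ℤ) + Pi.single p.1 (if p.2 then 1 else -1))
        ∈ posDom Λ := by
      intro i _
      by_cases h : i = p.1
      · subst h
        simp only [Pi.add_apply, Pi.single_eq_same]
        split_ifs <;> omega
      · simp only [Pi.add_apply, Pi.single_eq_of_ne h]
        omega
    obtain ⟨θ, hθ, m, B, hB, H⟩ := move_exists hIrr htwo hb
    refine ⟨θ, hθ, m, B, hB, fun y hy => ?_⟩
    have h := H y hy
    rwa [add_sub_cancel_left] at h
  choose θf hθf mf Bf hBf Hf using key
  obtain ⟨θ₃, m₃, B₃, hθ₃, hB₃, Hmv⟩ :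
      ∃ (θ₃ : ℝ) (m₃ : ℕ) (B₃ : ℝ), 0 < θ₃ ∧ 0 ≤ B₃ ∧
        ∀ (i : Fin d) (s : ℤ), (s = 1 ∨ s = -1) → ∀ y : Fin d → ℤ,
          (∀ j ∈ Λ, 2 ≤ y j) → chain μ Λ θ₃ m₃ B₃ y (y + Pi.single i s) := by
    rcases isEmpty_or_nonempty (Fin d) with he | hne
    · exact ⟨1, 0, 0, one_pos, le_rfl, fun i => (he.false i).elim⟩
    · have hU : (Finset.univ : Finset (Fin d × Bool)).Nonempty := Finset.univ_nonempty
      refine ⟨Finset.univ.inf' hU θf, Finset.univ.sup' hU mf, Finset.univ.sup' hU Bf,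
        ?_, ?_, ?_⟩
      · exact (Finset.lt_inf'_iff hU).2 fun p _ => hθf p
      · exact le_trans (hBf hU.choose) (Finset.le_sup' Bf (Finset.mem_univ _))
      · intro i s hs y hy
        rcases hs with hs | hs
        · subst hs
          have h := Hf (i, true) y hy
          simp only [if_pos] at h
          exact chain_mono (Finset.inf'_le θf (Finset.mem_univ (i, true)))
            (Finset.le_sup' mf (Finset.mem_univ (i, true)))
            (Finset.le_sup' Bf (Finset.mem_univ (i, true))) h
        · subst hs
          have h := Hf (i, false) y hy
          simp only [Bool.false_eq_true, if_neg, not_false_iff] at h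
          exact chain_mono (Finset.inf'_le θf (Finset.mem_univ (i, false)))
            (Finset.le_sup' mf (Finset.mem_univ (i, false)))
            (Finset.le_sup' Bf (Finset.mem_univ (i, false))) h
  set θ : ℝ := min θ₁ (min θ₂ θ₃) with hθdef
  set B : ℝ := max B₁ (max B₂ B₃) with hBdef
  have hθpos : 0 < θ := lt_min hθ₁ (lt_min hθ₂ hθ₃)
  have hBnn : 0 ≤ B := le_trans hB₁ (le_max_left _ _)
  set C : ℝ := (m₁ + m₂ + m₃ : ℝ) + B + 1 with hCdef
  have hCpos : 0 < C := by positivity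
  refine ⟨θ, hθpos, C, hCpos, ?_⟩
  intro x hx x' hx' hxx
  set N : ℕ := ∑ i, (x' i - x i).natAbs with hNdef
  have hN1 : 1 ≤ N := by
    obtain ⟨i, hi⟩ := Function.ne_iff.1 hxx
    have h1 : 1 ≤ (x' i - x i).natAbs := by omega
    exact le_trans h1 (Finset.single_le_sum (f := fun i => (x' i - x i).natAbs)
      (fun _ _ => Nat.zero_le _) (Finset.mem_univ i))
  -- step 1 : lift
  have h1 : chain μ Λ θ m₁ B x (x + (fun _ => 1 : Fin d → ℤ)) := by
    have := Hup x (fun i hi => by have := hx i hi; omega)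
    have hd : ((fun _ => 2 : Fin d → ℤ) - (fun _ => 1)) = (fun _ => 1 : Fin d → ℤ) := by
      funext i; simp
    rw [hd] at this
    exact chain_mono (min_le_left _ _) le_rfl (le_max_left _ _) this
  -- step 2 : move coordinates
  have h2 : chain μ Λ θ (m₃ * N) B (x + (fun _ => 1)) (x' + (fun _ => 1)) := by
    have hsum2 : (∑ i, ((x' + (fun _ => 1 : Fin d → ℤ)) i
        - (x + (fun _ => 1 : Fin d → ℤ)) i).natAbs) = N := by
      refine Finset.sum_congr rfl fun i _ => ?_
      simp only [Pi.add_apply]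
      congr 1
      omega
    have := phase2 Hmv N (x + (fun _ => 1)) (x' + (fun _ => 1))
      (fun i hi => by have := hx i hi; simp only [Pi.add_apply]; omega)
      (fun i hi => by have := hx' i hi; simp only [Pi.add_apply]; omega) hsum2
    exact chain_mono (le_trans (min_le_right _ _) (min_le_right _ _)) le_rfl
      (le_trans (le_max_right B₂ B₃) (le_max_right _ _)) this
  -- step 3 : descend
  have h3 : chain μ Λ θ m₂ B (x' + (fun _ => 1)) x' := by
    have := Hdown (x' + (fun _ => 1)) (fun i hi => by
      have := hx' i hi; simp only [Pi.add_apply]; omega)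
    have hd : (x' + (fun _ => 1 : Fin d → ℤ)) +
        ((fun _ => 1 : Fin d → ℤ) - (fun _ => 2)) = x' := by
      funext i; simp only [Pi.add_apply, Pi.sub_apply]; omega
    rw [hd] at this
    exact chain_mono (le_trans (min_le_right _ _) (min_le_left _ _)) le_rfl
      (le_trans (le_max_left B₂ B₃) (le_max_right _ _)) this
  have hfull := chain_trans h1 (chain_trans h2 h3)
  obtain ⟨k, c, hk, h0, hke, hmem, hstep⟩ := hfull
  have hznorm : znorm (x' - x) = (N : ℝ) := by
    rw [znorm, hNdef]
    push_cast
    refine Finset.sum_congr rfl fun i _ => ?_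
    rw [Nat.cast_natAbs]
    simp
  have hm1 : (0:ℝ) ≤ (m₁ : ℝ) := Nat.cast_nonneg _
  have hm2 : (0:ℝ) ≤ (m₂ : ℝ) := Nat.cast_nonneg _
  have hm3 : (0:ℝ) ≤ (m₃ : ℝ) := Nat.cast_nonneg _
  have hBC : B ≤ C := by rw [hCdef]; linarith
  have hkC : (k : ℝ) ≤ C * znorm (x' - x) := by
    rw [hznorm]
    have hkr : (k : ℝ) ≤ (m₁ : ℝ) + (m₃ : ℝ) * N + m₂ := by
      have h : k ≤ m₁ + (m₃ * N + m₂) := hk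
      calc (k : ℝ) ≤ ((m₁ + (m₃ * N + m₂) : ℕ) : ℝ) := by exact_mod_cast h
        _ = (m₁ : ℝ) + (m₃ : ℝ) * N + m₂ := by push_cast; ring
    have hNr : (1 : ℝ) ≤ (N : ℝ) := by exact_mod_cast hN1
    have hNr0 : (0 : ℝ) ≤ (N : ℝ) := by linarith
    rw [hCdef]
    nlinarith
  exact ⟨k, c, h0, hke, hkC, hmem, fun j hj =>
    ⟨le_trans (hstep j hj).1 hBC, (hstep j hj).2⟩⟩
end

section
/- Suppose (A1)-(A3) hold, all coordinates of the mean vector M are nonnegative, and set Λ = Λ(M). Then there exists ε_0 > 0 such that for every 0 < ε < ε_0: (i) for every x ∈ ℤ_+^d, E_x(exp(ε|S(τ)|); τ < τ_Λ) < ∞; (ii) for every fixed value of x^Λ ∈ ℤ_+^Λ, E_x(exp(ε|S^Λ(τ)|); τ < τ_Λ) → 0 as min_{i∈Λ^c} x^i → ∞. -/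
open Filter Topology

attribute [local instance] Classical.propDecidable

/-!
For `φ(a) ≤ 1`, `exp (a · S(n))` is a supermartingale, so `E_x[exp (a · S(n)); n < τ_A] ≤
φ(a)ⁿ exp (a · x)` for the walk killed outside any `A`. Summing over the last time before exit, an
exit expectation whose integrand is dominated on the exit set by finitely many such exponentials is
at most `∑ (1 - φ(a))⁻¹ exp (a · x)`.

If `τ < τ_Λ`, some coordinate `j ∉ Λ` of `S(τ)` is `≤ 0`, and `Mʲ > 0`. The direction equal to `-R`
at `j` (with `R` large) and to the signs of `S(τ)` elsewhere dominates `|S(τ)|`; equal to `1` on `Λ`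
and `0` elsewhere instead, it dominates `|S^Λ(τ)|`, and its exponential at `x` tends to `0` as
`xʲ → ∞`. Both have negative drift because `M ≥ 0`, and along any direction `v` of negative drift
`φ(ε v) < 1` for small `ε > 0`: `ε ↦ φ(ε v)` is the moment generating function of `v · S(1)`, which
(A2) makes differentiable at `0` with derivative `v · M`.
-/

open scoped ENNReal

lemma ENNReal.ofReal_tsum_le {ι : Type*} {f : ι → ℝ} (hf : ∀ i, 0 ≤ f i) :
    ENNReal.ofReal (∑' i, f i) ≤ ∑' i, ENNReal.ofReal (f i) := by
  by_cases hs : Summable f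
  · exact (ENNReal.ofReal_tsum_of_nonneg hf hs).le
  · simp [tsum_eq_zero_of_not_summable hs]

section KilledWalk

variable {V : Type*} [AddCommGroup V] {μ : V → ℝ}

lemma kern_nonneg (hnn : ∀ z, 0 ≤ μ z) (A : Set V) (n : ℕ) (x y : V) :
    0 ≤ kern μ A n x y := by
  induction n generalizing x with
  | zero => unfold kern; positivity
  | succ n ih => exact tsum_nonneg fun z => mul_nonneg (by split_ifs <;> simp [hnn]) (ih z)

lemma tsum_kern_mul_le_pow (hnn : ∀ z, 0 ≤ μ z) (A : Set V) {h : V → ℝ≥0∞} {ρ : ℝ≥0∞}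
    (hh : ∀ x, ∑' y, ENNReal.ofReal (μ (y - x)) * h y ≤ ρ * h x) (n : ℕ) (x : V) :
    ∑' z, ENNReal.ofReal (kern μ A n x z) * h z ≤ ρ ^ n * h x := by
  induction n generalizing x with
  | zero =>
    rw [tsum_eq_single x fun z hz => by simp [kern, Ne.symm hz]]
    by_cases hx : x ∈ A <;> simp [kern, hx]
  | succ n ih =>
    have hc : ∀ w, 0 ≤ if x ∈ A then μ (w - x) else 0 := fun w => by split_ifs <;> simp [hnn]
    calc ∑' z, ENNReal.ofReal (kern μ A (n + 1) x z) * h z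
        ≤ ∑' z, ∑' w, ENNReal.ofReal (if x ∈ A then μ (w - x) else 0) *
            (ENNReal.ofReal (kern μ A n w z) * h z) := by
          refine ENNReal.tsum_le_tsum fun z => ?_
          rw [kern]
          refine (mul_le_mul_left (ENNReal.ofReal_tsum_le fun w =>
            mul_nonneg (hc w) (kern_nonneg hnn A n w z)) _).trans_eq ?_
          rw [← ENNReal.tsum_mul_right]
          exact tsum_congr fun w => by rw [ENNReal.ofReal_mul (hc w), mul_assoc]
      _ = ∑' w, ENNReal.ofReal (if x ∈ A then μ (w - x) else 0) *
            ∑' z, ENNReal.ofReal (kern μ A n w z) * h z := by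
          rw [ENNReal.tsum_comm]; simp_rw [ENNReal.tsum_mul_left]
      _ ≤ ∑' w, ENNReal.ofReal (μ (w - x)) * (ρ ^ n * h w) :=
          ENNReal.tsum_le_tsum fun w => mul_le_mul' (ENNReal.ofReal_le_ofReal
            (by split_ifs <;> simp [hnn])) (ih w)
      _ ≤ ρ ^ (n + 1) * h x := by
          simp_rw [mul_left_comm _ (ρ ^ n), ENNReal.tsum_mul_left, pow_succ, mul_assoc]
          exact mul_le_mul_right (hh x) _

lemma exitExpE_le_sum (hnn : ∀ z, 0 ≤ μ z) (A B : Set V) (g : V → ℝ) {ι : Type*} (F : Finset ι)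
    (h : ι → V → ℝ≥0∞) (ρ : ι → ℝ≥0∞) (hρ : ∀ k ∈ F, ρ k ≤ 1)
    (hh : ∀ k ∈ F, ∀ x, ∑' y, ENNReal.ofReal (μ (y - x)) * h k y ≤ ρ k * h k x)
    (hg : ∀ y ∉ A, y ∈ B → ENNReal.ofReal (g y) ≤ ∑ k ∈ F, h k y) (x : V) :
    exitExpE μ A B g x ≤ ∑ k ∈ F, (1 - ρ k)⁻¹ * h k x := by
  have hexit : ∀ z, ∑' y, ENNReal.ofReal ((if y ∉ A ∧ y ∈ B then μ (y - z) else 0) * g y) ≤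
      ∑ k ∈ F, ρ k * h k z := by
    intro z
    calc ∑' y, ENNReal.ofReal ((if y ∉ A ∧ y ∈ B then μ (y - z) else 0) * g y)
        ≤ ∑' y, ∑ k ∈ F, ENNReal.ofReal (μ (y - z)) * h k y := by
          refine ENNReal.tsum_le_tsum fun y => ?_
          split_ifs with hy
          · rw [ENNReal.ofReal_mul (hnn _), ← Finset.mul_sum]
            exact mul_le_mul_right (hg y hy.1 hy.2) _
          · simp
      _ = ∑ k ∈ F, ∑' y, ENNReal.ofReal (μ (y - z)) * h k y :=
          Summable.tsum_finsetSum fun k _ => ENNReal.summable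
      _ ≤ ∑ k ∈ F, ρ k * h k z := Finset.sum_le_sum fun k hk => hh k hk z
  calc exitExpE μ A B g x
      ≤ ∑' n, ∑' z, ENNReal.ofReal (kern μ A n x z) * ∑ k ∈ F, ρ k * h k z :=
        ENNReal.tsum_le_tsum fun n => ENNReal.tsum_le_tsum fun z => mul_le_mul_right (hexit z) _
    _ = ∑ k ∈ F, ρ k * ∑' n, ∑' z, ENNReal.ofReal (kern μ A n x z) * h k z := by
        simp_rw [Finset.mul_sum, ← ENNReal.tsum_mul_left]
        rw [← Summable.tsum_finsetSum fun k _ => ENNReal.summable]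
        refine tsum_congr fun n => ?_
        rw [← Summable.tsum_finsetSum fun k _ => ENNReal.summable]
        exact tsum_congr fun z => Finset.sum_congr rfl fun k _ => mul_left_comm _ _ _
    _ ≤ ∑ k ∈ F, ρ k * ∑' n, ρ k ^ n * h k x :=
        Finset.sum_le_sum fun k hk => mul_le_mul_right (ENNReal.tsum_le_tsum fun n =>
          tsum_kern_mul_le_pow hnn A (hh k hk) n x) _
    _ ≤ ∑ k ∈ F, (1 - ρ k)⁻¹ * h k x := by
        refine Finset.sum_le_sum fun k hk => ?_
        rw [ENNReal.tsum_mul_right, ENNReal.tsum_geometric, ← mul_assoc]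
        exact mul_le_mul_left (mul_le_of_le_one_left' (hρ k hk)) _

end KilledWalk

open MeasureTheory ProbabilityTheory

section ExponentialMoments

variable {d : ℕ} {μ : (Fin d → ℤ) → ℝ}

lemma dotZ_smul (t : ℝ) (a : Fin d → ℝ) (z : Fin d → ℤ) : dotZ (t • a) z = t * dotZ a z := by
  simp [dotZ, Finset.mul_sum, mul_assoc]

lemma dotZ_add (a : Fin d → ℝ) (x y : Fin d → ℤ) : dotZ a (x + y) = dotZ a x + dotZ a y := by
  simp [dotZ, mul_add, Finset.sum_add_distrib]

lemma tsum_ofReal_mul_exp_dotZ (hnn : ∀ z, 0 ≤ μ z) (a : Fin d → ℝ) (x : Fin d → ℤ) :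
    ∑' y, ENNReal.ofReal (μ (y - x)) * ENNReal.ofReal (Real.exp (dotZ a y)) =
      phiE μ a * ENNReal.ofReal (Real.exp (dotZ a x)) := by
  rw [phiE, ← ENNReal.tsum_mul_right, ← (Equiv.addRight x).tsum_eq]
  refine tsum_congr fun z => ?_
  simp only [Equiv.coe_addRight, add_sub_cancel_right, dotZ_add, Real.exp_add]
  rw [← ENNReal.ofReal_mul (hnn z), ← mul_assoc,
    ← ENNReal.ofReal_mul (mul_nonneg (hnn z) (Real.exp_pos _).le)]

lemma summable_mul_exp_dotZ_iff (hnn : ∀ z, 0 ≤ μ z) {a : Fin d → ℝ} :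
    Summable (fun z => μ z * Real.exp (dotZ a z)) ↔ phiE μ a ≠ ⊤ := by
  refine ⟨Summable.tsum_ofReal_ne_top, fun h => (ENNReal.summable_toReal h).congr fun z => ?_⟩
  exact ENNReal.toReal_ofReal (by have := hnn z; positivity)

lemma phiE_eq_ofReal_tsum (hnn : ∀ z, 0 ≤ μ z) {a : Fin d → ℝ} (h : phiE μ a ≠ ⊤) :
    phiE μ a = ENNReal.ofReal (∑' z, μ z * Real.exp (dotZ a z)) :=
  (ENNReal.ofReal_tsum_of_nonneg (fun z => by have := hnn z; positivity)
    ((summable_mul_exp_dotZ_iff hnn).2 h)).symm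

noncomputable def stepMeasure (μ : (Fin d → ℤ) → ℝ) : Measure (Fin d → ℤ) :=
  Measure.sum fun z => ENNReal.ofReal (μ z) • Measure.dirac z

lemma integral_stepMeasure (hnn : ∀ z, 0 ≤ μ z) (f : (Fin d → ℤ) → ℝ) :
    ∫ z, f z ∂stepMeasure μ = ∑' z, μ z * f z := by
  rw [stepMeasure, integral_sum_dirac fun z => ENNReal.ofReal_ne_top]
  simp [ENNReal.toReal_ofReal (hnn _)]

lemma integrable_stepMeasure_iff (hnn : ∀ z, 0 ≤ μ z) {f : (Fin d → ℤ) → ℝ} :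
    Integrable f (stepMeasure μ) ↔ Summable fun z => μ z * |f z| := by
  rw [stepMeasure, integrable_sum_dirac_iff fun z => ENNReal.ofReal_ne_top]
  simp [ENNReal.toReal_ofReal (hnn _)]

lemma mem_integrableExpSet_dotZ_iff (hnn : ∀ z, 0 ≤ μ z) {v : Fin d → ℝ} {t : ℝ} :
    t ∈ integrableExpSet (dotZ v) (stepMeasure μ) ↔ phiE μ (t • v) ≠ ⊤ := by
  simp [integrableExpSet, integrable_stepMeasure_iff hnn, ← summable_mul_exp_dotZ_iff hnn,
    dotZ_smul]

lemma mgf_dotZ_stepMeasure (hnn : ∀ z, 0 ≤ μ z) (v : Fin d → ℝ) (t : ℝ) :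
    mgf (dotZ v) (stepMeasure μ) t = ∑' z, μ z * Real.exp (dotZ (t • v) z) := by
  simp [mgf, integral_stepMeasure hnn, dotZ_smul]

lemma mgf_dotZ_stepMeasure_zero (hnn : ∀ z, 0 ≤ μ z) (hsum : HasSum μ 1) (v : Fin d → ℝ) :
    mgf (dotZ v) (stepMeasure μ) 0 = 1 := by
  simp [mgf_dotZ_stepMeasure hnn, dotZ, hsum.tsum_eq]

variable (hfin : ∀ᶠ a in 𝓝 (0 : Fin d → ℝ), phiE μ a ≠ ⊤)
include hfin

lemma zero_mem_interior_integrableExpSet_dotZ (hnn : ∀ z, 0 ≤ μ z) (v : Fin d → ℝ) :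
    0 ∈ interior (integrableExpSet (dotZ v) (stepMeasure μ)) := by
  have hcont : Tendsto (fun t : ℝ => t • v) (𝓝 0) (𝓝 0) := by
    simpa using (tendsto_id (x := 𝓝 (0 : ℝ))).smul_const v
  rw [mem_interior_iff_mem_nhds]
  filter_upwards [hcont.eventually hfin] with t ht using (mem_integrableExpSet_dotZ_iff hnn).2 ht

lemma integral_dotZ_stepMeasure (hnn : ∀ z, 0 ≤ μ z) (v : Fin d → ℝ) :
    ∫ z, dotZ v z ∂stepMeasure μ = dotR v (Mvec μ) := by
  have hcoord : ∀ i, Integrable (fun z : Fin d → ℤ => (z i : ℝ)) (stepMeasure μ) := fun i => by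
    have hi : dotZ (Pi.single i 1) = fun z : Fin d → ℤ => (z i : ℝ) :=
      funext fun z => by simp [dotZ, Pi.single_apply]
    simpa [hi] using integrable_of_mem_interior_integrableExpSet
      (zero_mem_interior_integrableExpSet_dotZ hfin hnn (Pi.single i 1))
  simp_rw [dotZ]
  rw [integral_finsetSum _ fun i _ => (hcoord i).const_mul (v i)]
  simp_rw [integral_const_mul, integral_stepMeasure hnn]
  rfl

lemma hasDerivAt_mgf_dotZ_stepMeasure (hnn : ∀ z, 0 ≤ μ z) (v : Fin d → ℝ) :
    HasDerivAt (mgf (dotZ v) (stepMeasure μ)) (dotR v (Mvec μ)) 0 := by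
  simpa [integral_dotZ_stepMeasure hfin hnn] using
    hasDerivAt_mgf (zero_mem_interior_integrableExpSet_dotZ hfin hnn v)

end ExponentialMoments

lemma HasDerivAt.eventually_nhdsGT_lt {f : ℝ → ℝ} {f' x : ℝ} (hf : HasDerivAt f f' x)
    (hf' : f' < 0) : ∀ᶠ t in 𝓝[>] x, f t < f x := by
  filter_upwards [hf.hasDerivWithinAt.limsup_slope_le' (lt_irrefl x) hf', self_mem_nhdsWithin]
    with t ht hxt
  rw [slope_def_field, div_lt_iff₀ (sub_pos.2 hxt), zero_mul] at ht
  linarith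

section Drift

variable {d : ℕ} {μ : (Fin d → ℤ) → ℝ}

lemma phiE_zero (hnn : ∀ z, 0 ≤ μ z) (hsum : HasSum μ 1) : phiE μ 0 = 1 := by
  simp [phiE, dotZ, ← ENNReal.ofReal_tsum_of_nonneg hnn hsum.summable, hsum.tsum_eq]

lemma A2.eventually_phiE_ne_top (hnn : ∀ z, 0 ≤ μ z) (hsum : HasSum μ 1) (h : A2 μ) :
    ∀ᶠ a in 𝓝 (0 : Fin d → ℝ), phiE μ a ≠ ⊤ := by
  obtain ⟨U, hU, hDU, hfin⟩ := h
  exact Filter.mem_of_superset (hU.mem_nhds (hDU (phiE_zero hnn hsum).le)) hfin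

lemma eventually_phiE_smul_lt_one (hnn : ∀ z, 0 ≤ μ z) (hsum : HasSum μ 1)
    (hfin : ∀ᶠ a in 𝓝 (0 : Fin d → ℝ), phiE μ a ≠ ⊤) {v : Fin d → ℝ}
    (hv : dotR v (Mvec μ) < 0) : ∀ᶠ t in 𝓝[>] (0 : ℝ), phiE μ (t • v) < 1 := by
  have hlt := (hasDerivAt_mgf_dotZ_stepMeasure hfin hnn v).eventually_nhdsGT_lt hv
  rw [mgf_dotZ_stepMeasure_zero hnn hsum] at hlt
  have hne : ∀ᶠ t in 𝓝 (0 : ℝ), phiE μ (t • v) ≠ ⊤ :=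
    Filter.mem_of_superset
      (mem_interior_iff_mem_nhds.1 (zero_mem_interior_integrableExpSet_dotZ hfin hnn v))
      fun t ht => (mem_integrableExpSet_dotZ_iff hnn).1 ht
  filter_upwards [hlt, hne.filter_mono nhdsWithin_le_nhds] with t ht htop
  rw [phiE_eq_ofReal_tsum hnn htop, ← mgf_dotZ_stepMeasure hnn]
  exact ENNReal.ofReal_lt_one.2 ht

end Drift

section ExitDirections

variable {d : ℕ}

def exitDir (r : ℝ) (j : Fin d) (s : Fin d → SignType) : Fin d → ℝ :=
  fun i => if i = j then -r else s i

lemma dotR_exitDir_neg {M : Fin d → ℝ} (hM : ∀ i, 0 ≤ M i) {r : ℝ} {j : Fin d}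
    (hr : ∑ i, M i < r * M j) (s : Fin d → SignType) : dotR (exitDir r j s) M < 0 := by
  have hterm : ∀ i, exitDir r j s i * M i ≤ M i - if i = j then (r + 1) * M j else 0 := by
    intro i
    by_cases hij : i = j
    · subst hij; simp only [exitDir, if_true]; linarith
    · simp only [exitDir, hij, if_false, sub_zero]
      exact mul_le_of_le_one_left (hM i) (by cases s i <;> simp)
  calc dotR (exitDir r j s) M
      ≤ ∑ i, (M i - if i = j then (r + 1) * M j else 0) := Finset.sum_le_sum fun i _ => hterm i
    _ = ∑ i, M i - (r + 1) * M j := by simp [Finset.sum_sub_distrib]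
    _ < 0 := by nlinarith [hM j]

lemma exists_nonpos_of_notMem_posAll {Λ : Set (Fin d)} {y : Fin d → ℤ} (hy : y ∉ posAll)
    (hyΛ : y ∈ posDom Λ) : ∃ j ∉ Λ, y j ≤ 0 := by
  by_contra! h
  exact hy fun i => if hi : i ∈ Λ then hyΛ i hi else h i hi

lemma znorm_le_dotZ_exitDir {r : ℝ} (hr : 1 ≤ r) {y : Fin d → ℤ} {j : Fin d} (hyj : y j ≤ 0) :
    znorm y ≤ dotZ (exitDir r j fun i => SignType.sign (y i : ℝ)) y := by
  refine Finset.sum_le_sum fun i _ => ?_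
  by_cases hij : i = j
  · subst hij
    have hyi : (y i : ℝ) ≤ 0 := by exact_mod_cast hyj
    simp only [exitDir, if_true, abs_of_nonpos hyi]
    nlinarith
  · simp only [exitDir, hij, if_false]
    exact (sign_mul_self _).ge

lemma dotZ_exitDir_indicator {Λ : Set (Fin d)} {j : Fin d} (hj : j ∉ Λ) (r : ℝ)
    (x : Fin d → ℤ) :
    dotZ (exitDir r j (Λ.indicator 1)) x = ∑ i : Λ, (x i : ℝ) - r * x j := by
  have hterm : ∀ i, exitDir r j (Λ.indicator 1) i * x i =
      (if i ∈ Λ then (x i : ℝ) else 0) - if i = j then r * x j else 0 := by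
    intro i
    by_cases hij : i = j
    · subst hij; simp [exitDir, hj]
    · by_cases hiΛ : i ∈ Λ <;> simp [exitDir, hij, hiΛ]
  simp only [dotZ, hterm, Finset.sum_sub_distrib, Finset.sum_ite_eq', Finset.mem_univ, if_true]
  rw [← Finset.sum_filter, Finset.sum_subtype _ (p := (· ∈ Λ)) (by simp) (fun i => (x i : ℝ))]

lemma znorm_projL_le_dotZ_exitDir {Λ : Set (Fin d)} {r : ℝ} (hr : 0 ≤ r) {y : Fin d → ℤ}
    (hyΛ : y ∈ posDom Λ) {j : Fin d} (hj : j ∉ Λ) (hyj : y j ≤ 0) :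
    znorm (projL Λ y) ≤ dotZ (exitDir r j (Λ.indicator 1)) y := by
  have hyj' : (y j : ℝ) ≤ 0 := by exact_mod_cast hyj
  have habs : znorm (projL Λ y) = ∑ i : Λ, (y i : ℝ) :=
    Finset.sum_congr rfl fun i _ => abs_of_pos (by exact_mod_cast hyΛ i i.2)
  rw [dotZ_exitDir_indicator hj, habs]
  nlinarith

end ExitDirections

section ExitMoments

variable {d : ℕ} {μ : (Fin d → ℤ) → ℝ}

lemma exitExpE_le_sum_exp (hnn : ∀ z, 0 ≤ μ z) (A B : Set (Fin d → ℤ)) (g : (Fin d → ℤ) → ℝ)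
    {ι : Type*} (F : Finset ι) (a : ι → Fin d → ℝ) (hφ : ∀ k ∈ F, phiE μ (a k) ≤ 1)
    (hg : ∀ y ∉ A, y ∈ B →
      ENNReal.ofReal (g y) ≤ ∑ k ∈ F, ENNReal.ofReal (Real.exp (dotZ (a k) y)))
    (x : Fin d → ℤ) :
    exitExpE μ A B g x ≤
      ∑ k ∈ F, (1 - phiE μ (a k))⁻¹ * ENNReal.ofReal (Real.exp (dotZ (a k) x)) :=
  exitExpE_le_sum hnn A B g F _ _ hφ (fun k _ x => (tsum_ofReal_mul_exp_dotZ hnn (a k) x).le) hg x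

lemma inv_one_sub_ne_top {ρ : ℝ≥0∞} (h : ρ < 1) : (1 - ρ)⁻¹ ≠ ⊤ :=
  ENNReal.inv_ne_top.2 (tsub_pos_of_lt h).ne'

variable {Λ : Set (Fin d)} {R : Fin d → ℝ} {ε : ℝ}

lemma exitExpE_exp_znorm_ne_top (hnn : ∀ z, 0 ≤ μ z) (hR : ∀ j ∉ Λ, 1 ≤ R j)
    (hφ : ∀ j ∉ Λ, ∀ s, phiE μ (ε • exitDir (R j) j s) < 1) (hε : 0 ≤ ε) (x : Fin d → ℤ) :
    exitExpE μ posAll (posDom Λ) (fun y => Real.exp (ε * znorm y)) x ≠ ⊤ := by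
  let a : Fin d × (Fin d → SignType) → Fin d → ℝ := fun p => ε • exitDir (R p.1) p.1 p.2
  let F := Finset.univ.filter fun p : Fin d × (Fin d → SignType) => p.1 ∉ Λ
  have hφF : ∀ p ∈ F, phiE μ (a p) < 1 := fun p hp => hφ p.1 (Finset.mem_filter.1 hp).2 p.2
  refine ne_top_of_le_ne_top ?_
    (exitExpE_le_sum_exp hnn _ _ _ F a (fun p hp => (hφF p hp).le) (fun y hy hyΛ => ?_) x)
  · exact ENNReal.sum_ne_top.2 fun p hp =>
      ENNReal.mul_ne_top (inv_one_sub_ne_top (hφF p hp)) ENNReal.ofReal_ne_top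
  · obtain ⟨j, hj, hyj⟩ := exists_nonpos_of_notMem_posAll hy hyΛ
    refine le_trans ?_ (Finset.single_le_sum (fun _ _ => zero_le)
      (Finset.mem_filter.2 ⟨Finset.mem_univ (j, fun i => SignType.sign (y i : ℝ)), hj⟩))
    refine ENNReal.ofReal_le_ofReal (Real.exp_le_exp.2 ?_)
    rw [dotZ_smul]
    exact mul_le_mul_of_nonneg_left (znorm_le_dotZ_exitDir (hR j hj) hyj) hε

lemma exitExpE_exp_znorm_projL_le (hnn : ∀ z, 0 ≤ μ z) (hR : ∀ j ∉ Λ, 1 ≤ R j)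
    (hφ : ∀ j ∉ Λ, phiE μ (ε • exitDir (R j) j (Λ.indicator 1)) < 1)
    (hε : 0 ≤ ε) {K : ℝ} (hK : 0 ≤ K) {x : Fin d → ℤ} (hx : ∀ i ∉ Λ, K ≤ x i) :
    exitExpE μ posAll (posDom Λ) (fun y => Real.exp (ε * znorm (projL Λ y))) x ≤
      (∑ j ∈ Finset.univ.filter (· ∉ Λ),
        (1 - phiE μ (ε • exitDir (R j) j (Λ.indicator 1)))⁻¹) *
        ENNReal.ofReal (Real.exp (ε * (∑ i : Λ, (x i : ℝ) - K))) := by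
  let a : Fin d → Fin d → ℝ := fun j => ε • exitDir (R j) j (Λ.indicator 1)
  let F := Finset.univ.filter (· ∉ Λ)
  have hmem : ∀ j ∈ F, j ∉ Λ := fun j hj => (Finset.mem_filter.1 hj).2
  refine (exitExpE_le_sum_exp hnn _ _ _ F a (fun j hj => (hφ j (hmem j hj)).le)
    (fun y hy hyΛ => ?_) x).trans ?_
  · obtain ⟨j, hj, hyj⟩ := exists_nonpos_of_notMem_posAll hy hyΛ
    refine le_trans ?_ (Finset.single_le_sum (fun _ _ => zero_le)
      (Finset.mem_filter.2 ⟨Finset.mem_univ j, hj⟩))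
    refine ENNReal.ofReal_le_ofReal (Real.exp_le_exp.2 ?_)
    rw [dotZ_smul]
    exact mul_le_mul_of_nonneg_left
      (znorm_projL_le_dotZ_exitDir (by linarith [hR j hj]) hyΛ hj hyj) hε
  · rw [Finset.sum_mul]
    refine Finset.sum_le_sum fun j hj => mul_le_mul_right (ENNReal.ofReal_le_ofReal ?_) _
    refine Real.exp_le_exp.2 ?_
    rw [dotZ_smul, dotZ_exitDir_indicator (hmem j hj)]
    have hxj := hx j (hmem j hj)
    have hRj := hR j (hmem j hj)
    gcongr
    nlinarith

lemma exists_exitExpE_exp_znorm_projL_lt (hnn : ∀ z, 0 ≤ μ z) (hR : ∀ j ∉ Λ, 1 ≤ R j)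
    (hφ : ∀ j ∉ Λ, phiE μ (ε • exitDir (R j) j (Λ.indicator 1)) < 1)
    (hε : 0 < ε) (u : Λ → ℤ) {η : ℝ} (hη : 0 < η) :
    ∃ K : ℤ, ∀ x : Fin d → ℤ, projL Λ x = u → (∀ i ∉ Λ, K ≤ x i) →
      exitExpE μ posAll (posDom Λ) (fun y => Real.exp (ε * znorm (projL Λ y))) x <
        ENNReal.ofReal η := by
  set C := ∑ j ∈ Finset.univ.filter (· ∉ Λ),
    (1 - phiE μ (ε • exitDir (R j) j (Λ.indicator 1)))⁻¹
  set S := ∑ i : Λ, (u i : ℝ)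
  have hC : C ≠ ⊤ :=
    ENNReal.sum_ne_top.2 fun j hj => inv_one_sub_ne_top (hφ j (Finset.mem_filter.1 hj).2)
  have hlim : Tendsto (fun K : ℤ => C * ENNReal.ofReal (Real.exp (ε * (S - K)))) atTop (𝓝 0) := by
    have hexp : Tendsto (fun K : ℤ => ε * (S - K)) atTop atBot :=
      Tendsto.const_mul_atBot hε (tendsto_atBot_add_const_left _ S
        (tendsto_neg_atTop_atBot.comp tendsto_intCast_atTop_atTop))
    simpa using ENNReal.Tendsto.const_mul
      (ENNReal.tendsto_ofReal (Real.tendsto_exp_atBot.comp hexp)) (Or.inr hC)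
  obtain ⟨K, hKη, hK⟩ :=
    ((hlim.eventually (gt_mem_nhds (ENNReal.ofReal_pos.2 hη))).and (eventually_ge_atTop 0)).exists
  refine ⟨K, fun x hxu hx => lt_of_le_of_lt ?_ hKη⟩
  have hS : ∑ i : Λ, (x i : ℝ) = S := by subst hxu; rfl
  rw [← hS]
  exact exitExpE_exp_znorm_projL_le hnn hR hφ hε.le (by exact_mod_cast hK)
    fun i hi => by exact_mod_cast hx i hi

end ExitMoments

theorem statement16_general {d : ℕ} (μ : (Fin d → ℤ) → ℝ)
    (hnn : ∀ z, 0 ≤ μ z) (hsum : HasSum μ 1)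
    (hA2 : A2 μ)
    (hM : ∀ i, 0 ≤ Mvec μ i) :
    ∃ ε₀ : ℝ, 0 < ε₀ ∧ ∀ ε : ℝ, 0 < ε → ε < ε₀ →
      -- (i) `E_x(exp(ε|S(τ)|); τ < τ_Λ) < ∞`
      (∀ x ∈ posAll,
        exitExpE μ posAll (posDom (LambdaM μ)) (fun y => Real.exp (ε * znorm y)) x ≠ ⊤) ∧
      -- (ii) `E_x(exp(ε|S^Λ(τ)|); τ < τ_Λ) → 0` as `min_{i ∈ Λᶜ} xⁱ → ∞`, `x^Λ` fixed
      (∀ u ∈ posL (LambdaM μ), ∀ η : ℝ, 0 < η → ∃ K : ℤ, ∀ x : Fin d → ℤ,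
        projL (LambdaM μ) x = u → (∀ i : Fin d, i ∉ LambdaM μ → K ≤ x i) →
        exitExpE μ posAll (posDom (LambdaM μ))
            (fun y => Real.exp (ε * znorm (projL (LambdaM μ) y))) x
          < ENNReal.ofReal η) := by
  set Λ := LambdaM μ
  -- `R j` makes `exitDir (R j) j s` a direction of negative drift, whatever the signs `s`.
  let R : Fin d → ℝ := fun j => (1 + ∑ i, Mvec μ i) / Mvec μ j
  have hR : ∀ j ∉ Λ, 1 ≤ R j ∧ ∑ i, Mvec μ i < R j * Mvec μ j := fun j hj => by
    have hMj : 0 < Mvec μ j := (hM j).lt_of_ne' hj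
    have := Finset.single_le_sum (fun i _ => hM i) (Finset.mem_univ j)
    refine ⟨(one_le_div hMj).2 (by linarith), ?_⟩
    rw [div_mul_cancel₀ _ hMj.ne']
    linarith
  have hφ : ∀ᶠ ε in 𝓝[>] (0 : ℝ), ∀ p : Fin d × (Fin d → SignType),
      p.1 ∉ Λ → phiE μ (ε • exitDir (R p.1) p.1 p.2) < 1 := by
    refine eventually_all.2 fun p => ?_
    by_cases hp : p.1 ∈ Λ
    · exact Eventually.of_forall fun _ h => absurd hp h
    · filter_upwards [eventually_phiE_smul_lt_one hnn hsum (hA2.eventually_phiE_ne_top hnn hsum)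
        (dotR_exitDir_neg hM (hR p.1 hp).2 p.2)] with ε h _ using h
  obtain ⟨ε₀, hε₀, hsub⟩ := mem_nhdsGT_iff_exists_Ioo_subset.1 hφ
  refine ⟨ε₀, hε₀, fun ε hε hεε₀ => ⟨fun x _ => ?_, fun u _ η hη => ?_⟩⟩
  · exact exitExpE_exp_znorm_ne_top hnn (fun j hj => (hR j hj).1)
      (fun j hj s => hsub ⟨hε, hεε₀⟩ (j, s) hj) hε.le x
  · exact exists_exitExpE_exp_znorm_projL_lt hnn (fun j hj => (hR j hj).1)
      (fun j hj => hsub ⟨hε, hεε₀⟩ (j, _) hj) hε u hη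

theorem statement16 {d : ℕ} (μ : (Fin d → ℤ) → ℝ)
    (hnn : ∀ z, 0 ≤ μ z) (hsum : HasSum μ 1)
    (hA1 : A1 μ) (hA2 : A2 μ) (hA3 : A3 μ)
    (hM : ∀ i, 0 ≤ Mvec μ i) :
    ∃ ε₀ : ℝ, 0 < ε₀ ∧ ∀ ε : ℝ, 0 < ε → ε < ε₀ →
      -- (i) `E_x(exp(ε|S(τ)|); τ < τ_Λ) < ∞`
      (∀ x ∈ posAll,
        exitExpE μ posAll (posDom (LambdaM μ)) (fun y => Real.exp (ε * znorm y)) x ≠ ⊤) ∧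
      -- (ii) `E_x(exp(ε|S^Λ(τ)|); τ < τ_Λ) → 0` as `min_{i ∈ Λᶜ} xⁱ → ∞`, `x^Λ` fixed
      (∀ u ∈ posL (LambdaM μ), ∀ η : ℝ, 0 < η → ∃ K : ℤ, ∀ x : Fin d → ℤ,
        projL (LambdaM μ) x = u → (∀ i : Fin d, i ∉ LambdaM μ → K ≤ x i) →
        exitExpE μ posAll (posDom (LambdaM μ))
            (fun y => Real.exp (ε * znorm (projL (LambdaM μ) y))) x
          < ENNReal.ofReal η) :=
  statement16_general μ hnn hsum hA2 hM
end
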